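/- arXiv:2402.12549 — 3 statements merged into one kernel-verified Lean document; each statement's English description precedes it below -/
import Mathlib

section
/- For every integer n ≥ 1, FFW_2(n) = Σ_{j=1}^{n-1} d(j) − d(n) + 1. -/
/-!
Write `G(c, N)` (`signedPartsAbove c N`) for the signed count `∑ (-1)^#S` over the sets `S` of
distinct parts `> c` with sum `N`; it is the coefficient of `q^N` in `(q^{c+1}; q)_∞`.
Since `c < s₂(S)` exactly when `S` has at least two parts and at most one of them is `≤ c`,
summing over `c < n` and splitting off that small part `a` gives
`FFW₂(n) = ∑_{c<n} (G(c, n) - ∑_{a=1}^{c} G(c, n - a) + 1)`.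

The telescoping identity `(1 - q^{M+1}) ∑_{c<C} q^c (q^{c+1}; q)_M = (q^C; q)_{M+1}` says that
`∑_{c<C} q^c (q^{c+1}; q)_M` agrees with `1 / (1 - q^{M+1})` below degree `C`.
For `M = j` this gives `∑_{c+N=j} G(c, N) = [j = 0]`; summing
`(q^{c+1}; q)_M - 1 = -∑_{k<M} q^{c+1+k} (q^{c+1}; q)_k` over `c` gives `∑_c G(c, N) = -d(N)`.
Splitting the square `c, N < n` at the antidiagonal `c + N = n` turns these two identities into
the value of the double sum.
-/

open Finset Filter

namespace PaperFFW

/-- Finite q-Pochhammer symbol `(a;q)_n`. -/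
def qPoch (a q : ℂ) (n : ℕ) : ℂ := ∏ j ∈ Finset.range n, (1 - a * q ^ j)

/-- Infinite q-Pochhammer symbol `(a;q)_∞`. -/
noncomputable def qPochInf (a q : ℂ) : ℂ := ∏' j : ℕ, (1 - a * q ^ j)

/-- Gaussian binomial coefficient `[n choose k]_q`. -/
noncomputable def qBinom (n k : ℕ) (q : ℂ) : ℂ :=
  if k ≤ n then qPoch q q n / (qPoch q q k * qPoch q q (n - k)) else 0

/-- The `k`-th smallest part of a partition (1-indexed);
`0` if the partition has fewer than `k` parts, and `0` for `k = 0`. -/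
def kthPart {n : ℕ} (k : ℕ) (π : n.Partition) : ℕ :=
  match k with
  | 0 => 0
  | k + 1 => (π.parts.sort (· ≤ ·)).getD k 0

/-- The number of parts `#(π)`. -/
def numParts {n : ℕ} (π : n.Partition) : ℕ := Multiset.card π.parts

/-- The set `𝒟(n)` of partitions of `n` into distinct parts. -/
def distinctPartitions (n : ℕ) : Finset (Nat.Partition n) :=
  Finset.univ.filter fun π => π.parts.Nodup

/-- The set `𝒟₂(n)` of partitions of `n` into distinct parts with at least two parts. -/
def distinctPartitions2 (n : ℕ) : Finset (Nat.Partition n) :=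
  Finset.univ.filter fun π => π.parts.Nodup ∧ 2 ≤ Multiset.card π.parts

/-- `FFW_k(n) = Σ_{π ∈ 𝒟(n)} (-1)^{#(π)} s_k(π)`. -/
def FFW (k n : ℕ) : ℤ :=
  ∑ π ∈ distinctPartitions n, (-1) ^ numParts π * (kthPart k π : ℤ)

/-- `FFW_k(z,n) = Σ_{π ∈ 𝒟(n)} (-1)^{#(π)} z^{s_k(π)}`. -/
noncomputable def FFWz (k : ℕ) (z : ℂ) (n : ℕ) : ℂ :=
  ∑ π ∈ distinctPartitions n, (-1) ^ numParts π * z ^ kthPart k π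

/-- `d_{≥k}(n)`: the number of divisors of `n` that are at least `k`. -/
def dGE (k n : ℕ) : ℕ := (n.divisors.filter fun d => k ≤ d).card


open Polynomial

noncomputable def qPochX (a M : ℕ) : ℤ[X] := ∏ j ∈ range M, (1 - X ^ (a + j))

lemma qPochX_zero_right (a : ℕ) : qPochX a 0 = 1 := prod_range_zero _

lemma qPochX_succ (a M : ℕ) : qPochX a (M + 1) = qPochX a M * (1 - X ^ (a + M)) :=
  prod_range_succ _ _

lemma qPochX_succ' (a M : ℕ) : qPochX a (M + 1) = qPochX (a + 1) M * (1 - X ^ a) := by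
  rw [qPochX, prod_range_succ', add_zero, qPochX]
  congr 1
  exact prod_congr rfl fun j _ => by ring_nf

lemma qPochX_zero_left (M : ℕ) : qPochX 0 (M + 1) = 0 := by
  simp [qPochX_succ']

lemma coeff_qPochX_of_lt {a j : ℕ} (hj : j < a) (M : ℕ) :
    (qPochX a M).coeff j = if j = 0 then 1 else 0 := by
  induction M with
  | zero => simp [qPochX_zero_right, coeff_one]
  | succ M ih =>
    rw [qPochX_succ, mul_sub, mul_one, coeff_sub, mul_comm, coeff_X_pow_mul', ih,
      if_neg (show ¬ a + M ≤ j by omega), sub_zero]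

lemma qPochX_sub_one (a M : ℕ) :
    qPochX a M - 1 = -∑ k ∈ range M, X ^ (a + k) * qPochX a k := by
  have step (k : ℕ) : qPochX a (k + 1) - qPochX a k = -(X ^ (a + k) * qPochX a k) := by
    rw [qPochX_succ]; ring
  rw [← sum_neg_distrib, ← sum_congr rfl fun k _ => step k, sum_range_sub, qPochX_zero_right]

lemma one_sub_X_pow_mul_sum_qPochX (M C : ℕ) :
    (1 - X ^ (M + 1)) * ∑ c ∈ range C, X ^ c * qPochX (c + 1) M = qPochX C (M + 1) := by
  have step (c : ℕ) : (1 - X ^ (M + 1)) * (X ^ c * qPochX (c + 1) M)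
      = qPochX (c + 1) (M + 1) - qPochX c (M + 1) := by
    rw [qPochX_succ, qPochX_succ']; ring
  rw [mul_sum, sum_congr rfl fun c _ => step c, sum_range_sub (qPochX · (M + 1)),
    qPochX_zero_left, sub_zero]

lemma coeff_one_sub_X_pow_mul {R : Type*} [Ring R] (f : R[X]) (k j : ℕ) :
    ((1 - X ^ k) * f).coeff j = f.coeff j - if k ≤ j then f.coeff (j - k) else 0 := by
  rw [sub_mul, one_mul, coeff_sub, coeff_X_pow_mul']

lemma coeff_eq_of_one_sub_X_pow_mul {R : Type*} [Ring R] {f : R[X]} {k C : ℕ} (hk : 0 < k)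
    (h : ∀ j < C, ((1 - X ^ k) * f).coeff j = if j = 0 then 1 else 0) :
    ∀ j < C, f.coeff j = if k ∣ j then 1 else 0 := by
  intro j
  induction j using Nat.strong_induction_on with
  | _ j ih =>
    intro hj
    have hrec := h j hj
    rw [coeff_one_sub_X_pow_mul] at hrec
    rcases Nat.eq_zero_or_pos j with rfl | hj0
    · simpa [Nat.not_le.mpr hk] using hrec
    rw [if_neg hj0.ne'] at hrec
    by_cases hkj : k ≤ j
    · rw [if_pos hkj, ih (j - k) (by omega) (by omega)] at hrec
      simpa only [← Nat.dvd_sub_iff_left hkj dvd_rfl, sub_eq_zero] using hrec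
    · rw [if_neg hkj, sub_zero] at hrec
      rw [hrec, if_neg fun hd => hkj (Nat.le_of_dvd hj0 hd)]

lemma coeff_sum_X_pow_mul_qPochX {M C j : ℕ} (hj : j < C) :
    (∑ c ∈ range C, X ^ c * qPochX (c + 1) M).coeff j = if M + 1 ∣ j then 1 else 0 :=
  coeff_eq_of_one_sub_X_pow_mul M.succ_pos
    (fun i hi => by rw [one_sub_X_pow_mul_sum_qPochX, coeff_qPochX_of_lt hi]) j hj

def partsAbove (c N : ℕ) : Finset (Finset ℕ) := {S ∈ (Ioc c N).powerset | ∑ x ∈ S, x = N}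

def signedPartsAbove (c N : ℕ) : ℤ := ∑ S ∈ partsAbove c N, (-1) ^ #S

lemma mem_partsAbove {c N : ℕ} {S : Finset ℕ} :
    S ∈ partsAbove c N ↔ S ⊆ Ioc c N ∧ ∑ x ∈ S, x = N := by
  rw [partsAbove, mem_filter, mem_powerset]

lemma lt_and_le_of_mem_partsAbove {c N x : ℕ} {S : Finset ℕ} (hS : S ∈ partsAbove c N)
    (hx : x ∈ S) : c < x ∧ x ≤ N :=
  mem_Ioc.mp ((mem_partsAbove.mp hS).1 hx)

lemma filter_powerset_Ioc_sum_eq {c N K : ℕ} (hNK : N ≤ K) :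
    {S ∈ (Ioc c K).powerset | ∑ x ∈ S, x = N} = partsAbove c N := by
  ext S
  simp only [mem_partsAbove, mem_filter, mem_powerset, and_congr_left_iff]
  intro hsum
  refine ⟨fun hS x hx => ?_, fun hS => hS.trans (Ioc_subset_Ioc_right hNK)⟩
  have hxN : x ≤ N := hsum ▸ single_le_sum_of_canonicallyOrdered (f := fun x => x) hx
  exact mem_Ioc.mpr ⟨(mem_Ioc.mp (hS hx)).1, hxN⟩

lemma signedPartsAbove_zero_right (c : ℕ) : signedPartsAbove c 0 = 1 := by
  simp [signedPartsAbove, partsAbove, sum_filter]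

lemma signedPartsAbove_eq_zero {c N : ℕ} (hN : 0 < N) (hNc : N ≤ c) :
    signedPartsAbove c N = 0 := by
  simp [signedPartsAbove, partsAbove, Ioc_eq_empty_of_le hNc, sum_filter, hN.ne]

lemma coeff_prod_one_sub_X_pow {R : Type*} [CommRing R] (A : Finset ℕ) (N : ℕ) :
    (∏ j ∈ A, (1 - X ^ j) : R[X]).coeff N
      = ∑ S ∈ A.powerset with ∑ x ∈ S, x = N, (-1) ^ #S := by
  have hexp : (∏ j ∈ A, (1 - X ^ j) : R[X])
      = ∑ S ∈ A.powerset, C ((-1) ^ #S) * X ^ ∑ x ∈ S, x := by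
    rw [prod_congr rfl fun j _ => sub_eq_neg_add (1 : R[X]) (X ^ j), prod_add]
    simp [prod_neg, prod_pow_eq_pow_sum _ (fun x => x)]
  rw [hexp, finsetSum_coeff, sum_filter]
  simp_rw [coeff_C_mul_X_pow, eq_comm]

lemma coeff_qPochX {c M N : ℕ} (h : N ≤ c + M) :
    (qPochX (c + 1) M).coeff N = signedPartsAbove c N := by
  have hprod : qPochX (c + 1) M = ∏ j ∈ Ioc c (c + M), (1 - X ^ j) := by
    rw [← Ico_add_one_add_one_eq_Ioc, prod_Ico_eq_prod_range, add_right_comm,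
      Nat.add_sub_cancel_left, qPochX]
  rw [hprod, coeff_prod_one_sub_X_pow, filter_powerset_Ioc_sum_eq h, signedPartsAbove]

lemma card_divisors_eq_sum_range {N : ℕ} (hN : N ≠ 0) :
    (#N.divisors : ℤ) = ∑ k ∈ range N, if k + 1 ∣ N then 1 else 0 := by
  rw [← Nat.filter_dvd_eq_divisors hN, natCast_card_filter, sum_range_succ']
  simp [hN]

lemma coeff_sum_qPochX_sub_one {M C N : ℕ} (hN : 0 < N) (hNC : N < C) :
    (∑ c ∈ range C, (qPochX (c + 1) M - 1)).coeff N
      = -∑ k ∈ range M, if k + 1 ∣ N then 1 else 0 := by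
  have hexp : ∑ c ∈ range C, (qPochX (c + 1) M - 1)
      = -∑ k ∈ range M, X ^ (k + 1) * ∑ c ∈ range C, X ^ c * qPochX (c + 1) k := by
    simp_rw [qPochX_sub_one, sum_neg_distrib, mul_sum]
    rw [sum_comm]
    exact congrArg _ (sum_congr rfl fun k _ => sum_congr rfl fun c _ => by ring)
  rw [hexp, coeff_neg, finsetSum_coeff]
  congr 1
  refine sum_congr rfl fun k _ => ?_
  rw [coeff_X_pow_mul']
  by_cases hk : k + 1 ≤ N
  · rw [if_pos hk, coeff_sum_X_pow_mul_qPochX (by omega)]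
    simp only [← Nat.dvd_sub_iff_left hk dvd_rfl]
  · rw [if_neg hk, if_neg fun hd => hk (Nat.le_of_dvd hN hd)]

theorem sum_range_signedPartsAbove {N K : ℕ} (hN : 0 < N) (hNK : N ≤ K) :
    ∑ c ∈ range K, signedPartsAbove c N = -#N.divisors := by
  have hcoeff := coeff_sum_qPochX_sub_one (M := N) hN (Nat.lt_succ_of_le hNK)
  rw [finsetSum_coeff, sum_range_succ] at hcoeff
  simp only [coeff_sub, coeff_qPochX (le_add_self), coeff_one, if_neg hN.ne', sub_zero,
    signedPartsAbove_eq_zero hN hNK, add_zero] at hcoeff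
  rw [hcoeff, card_divisors_eq_sum_range hN.ne']

theorem sum_antidiagonal_signedPartsAbove (j : ℕ) :
    ∑ c ∈ range (j + 1), signedPartsAbove c (j - c) = if j = 0 then 1 else 0 := by
  have hcoeff := coeff_sum_X_pow_mul_qPochX (M := j) (Nat.lt_succ_self j)
  have hdvd : j + 1 ∣ j ↔ j = 0 :=
    ⟨fun h => Nat.eq_zero_of_dvd_of_lt h j.lt_succ_self, fun h => h ▸ dvd_zero _⟩
  rw [finsetSum_coeff] at hcoeff
  simp only [hdvd] at hcoeff
  rw [← hcoeff]
  refine sum_congr rfl fun c hc => ?_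
  rw [coeff_X_pow_mul', if_pos (Nat.lt_succ_iff.mp (mem_range.mp hc)), coeff_qPochX (by omega)]

theorem sum_range_sum_Icc_signedPartsAbove {n : ℕ} (hn : 0 < n) :
    ∑ c ∈ range n, ∑ a ∈ Icc 1 c, signedPartsAbove c (n - a)
      = n - 1 - ∑ N ∈ Ico 1 n, (#N.divisors : ℤ) := by
  have hsplit (c : ℕ) (hc : c ∈ range n) :
      ∑ a ∈ Icc 1 c, signedPartsAbove c (n - a)
        = ∑ N ∈ range n, signedPartsAbove c N
          - ∑ N ∈ range (n - c), signedPartsAbove c N := by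
    rw [← Ico_add_one_right_eq_Icc, sum_Ico_reflect _ 1 (by simpa using (mem_range.mp hc).le),
      Nat.add_sub_add_right, Nat.add_sub_cancel, eq_sub_iff_add_eq',
      sum_range_add_sum_Ico _ (Nat.sub_le n c)]
  have hdiag : ∑ c ∈ range n, ∑ N ∈ range (n - c), signedPartsAbove c N = 1 := by
    simp [← sum_range_diag_flip, sum_antidiagonal_signedPartsAbove, hn]
  have hfull : ∑ c ∈ range n, ∑ N ∈ range n, signedPartsAbove c N
      = n - ∑ N ∈ Ico 1 n, (#N.divisors : ℤ) := by
    rw [sum_comm, range_eq_Ico, sum_eq_sum_Ico_succ_bot hn, ← range_eq_Ico,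
      sum_congr rfl fun N hN => sum_range_signedPartsAbove (mem_Ico.mp hN).1 (mem_Ico.mp hN).2.le]
    simp [signedPartsAbove_zero_right, sub_eq_add_neg]
  rw [sum_congr rfl hsplit, sum_sub_distrib, hfull, hdiag]
  ring

def secondSmallest (S : Finset ℕ) : ℕ := (S.sort (· ≤ ·)).getD 1 0

lemma lt_getD_one_iff_of_pairwise {l : List ℕ} (hl : l.Pairwise (· ≤ ·)) (c : ℕ) :
    c < l.getD 1 0 ↔ 2 ≤ l.length ∧ (l.filter (· ≤ c)).length ≤ 1 := by
  match l, hl with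
  | [], _ => simp
  | [a], _ => simp
  | a :: b :: t, hl =>
    obtain ⟨hab, hbt⟩ : a ≤ b ∧ ∀ x ∈ t, b ≤ x := by
      simp only [List.pairwise_cons, List.mem_cons] at hl
      exact ⟨hl.1 b (.inl rfl), hl.2.1⟩
    have ht : c < b → t.filter (· ≤ c) = [] := fun hcb =>
      List.filter_eq_nil_iff.mpr fun x hx => by simpa using hcb.trans_le (hbt x hx)
    by_cases hcb : c < b
    · by_cases hac : a ≤ c <;> simp [hcb, hac, ht hcb]
    · simp [hcb, show a ≤ c by omega, show b ≤ c by omega]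

lemma card_filter_le_eq_length_filter_sort (S : Finset ℕ) (c : ℕ) :
    #{x ∈ S | x ≤ c} = ((S.sort (· ≤ ·)).filter (· ≤ c)).length := by
  rw [← Multiset.coe_card, ← Multiset.filter_coe, sort_eq]
  rfl

lemma lt_secondSmallest_iff (S : Finset ℕ) (c : ℕ) :
    c < secondSmallest S ↔ 2 ≤ #S ∧ #{x ∈ S | x ≤ c} ≤ 1 := by
  rw [secondSmallest, lt_getD_one_iff_of_pairwise (pairwise_sort _ _), length_sort,
    card_filter_le_eq_length_filter_sort]

lemma FFW_two_eq_sum_partsAbove (n : ℕ) :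
    FFW 2 n = ∑ S ∈ partsAbove 0 n, (-1) ^ #S * (secondSmallest S : ℤ) := by
  have hsum (S : Finset ℕ) : ∑ x ∈ S, x = S.val.sum := (sum_val S).symm
  refine sum_bij' (fun π hπ => ⟨π.parts, (mem_filter.mp hπ).2⟩)
    (fun S hS => ⟨S.val, fun hi => (lt_and_le_of_mem_partsAbove hS hi).1,
      (hsum S).symm.trans (mem_partsAbove.mp hS).2⟩)
    (fun π _ => ?_) (fun S _ => mem_filter.mpr ⟨mem_univ _, S.nodup⟩)
    (fun π _ => rfl) (fun S _ => rfl) (fun π _ => rfl)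
  refine mem_partsAbove.mpr ⟨fun i hi => mem_Ioc.mpr ⟨π.parts_pos hi, ?_⟩, ?_⟩
  · exact π.parts_sum ▸ Multiset.le_sum_of_mem hi
  · exact (hsum _).trans π.parts_sum

lemma filter_le_insert {α : Type*} [LinearOrder α] {a c : α} {T : Finset α} (ha : a ≤ c)
    (hT : ∀ x ∈ T, c < x) : {x ∈ insert a T | x ≤ c} = {a} := by
  rw [filter_insert, if_pos ha, filter_eq_empty_iff.mpr fun x hx => (hT x hx).not_ge,
    insert_empty]

lemma filter_lt_insert {α : Type*} [LinearOrder α] {a c : α} {T : Finset α} (ha : a ≤ c)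
    (hT : ∀ x ∈ T, c < x) : {x ∈ insert a T | c < x} = T := by
  rw [filter_insert, if_neg ha.not_gt, filter_true_of_mem hT]

lemma insert_mem_partsAbove_zero {a c n : ℕ} {T : Finset ℕ} (ha : a ∈ Icc 1 c) (hcn : c ≤ n)
    (hT : T ∈ partsAbove c (n - a)) : insert a T ∈ partsAbove 0 n := by
  obtain ⟨ha1, hac⟩ := mem_Icc.mp ha
  have haT : a ∉ T := fun h => (lt_and_le_of_mem_partsAbove hT h).1.not_ge hac
  refine mem_partsAbove.mpr
    ⟨insert_subset (mem_Ioc.mpr ⟨ha1, hac.trans hcn⟩) fun x hx => ?_, ?_⟩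
  · obtain ⟨hcx, hxn⟩ := lt_and_le_of_mem_partsAbove hT hx
    exact mem_Ioc.mpr ⟨(Nat.zero_le c).trans_lt hcx, hxn.trans (Nat.sub_le n a)⟩
  · rw [sum_insert haT, (mem_partsAbove.mp hT).2]
    omega

lemma sum_partsAbove_zero_one_part_le {M : Type*} [AddCommMonoid M] (f : Finset ℕ → M)
    {c n : ℕ} (hcn : c ≤ n) :
    ∑ S ∈ partsAbove 0 n with #{x ∈ S | x ≤ c} = 1, f S
      = ∑ a ∈ Icc 1 c, ∑ T ∈ partsAbove c (n - a), f (insert a T) := by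
  rw [sum_sigma']
  refine (sum_bij (fun p _ => insert p.1 p.2) (fun p hp => ?_) (fun p hp q hq hpq => ?_)
    (fun S hS => ?_) (fun _ _ => rfl)).symm
  · obtain ⟨ha, hT⟩ := mem_sigma.mp hp
    rw [mem_filter,
      filter_le_insert (mem_Icc.mp ha).2 fun x hx => (lt_and_le_of_mem_partsAbove hT hx).1]
    exact ⟨insert_mem_partsAbove_zero ha hcn hT, card_singleton _⟩
  · obtain ⟨ha, hT⟩ := mem_sigma.mp hp
    obtain ⟨hb, hU⟩ := mem_sigma.mp hq
    have hT' x (hx : x ∈ p.2) := (lt_and_le_of_mem_partsAbove hT hx).1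
    have hU' x (hx : x ∈ q.2) := (lt_and_le_of_mem_partsAbove hU hx).1
    have hab := congrArg (filter (· ≤ c)) hpq
    have hTU := congrArg (filter (c < ·)) hpq
    rw [filter_le_insert (mem_Icc.mp ha).2 hT', filter_le_insert (mem_Icc.mp hb).2 hU',
      singleton_inj] at hab
    rw [filter_lt_insert (mem_Icc.mp ha).2 hT', filter_lt_insert (mem_Icc.mp hb).2 hU'] at hTU
    exact Sigma.ext hab (heq_of_eq hTU)
  · obtain ⟨hS, hcard⟩ := mem_filter.mp hS
    obtain ⟨a, hL⟩ := card_eq_one.mp hcard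
    obtain ⟨haS, hac⟩ := mem_filter.mp (hL ▸ mem_singleton_self a)
    set T := {x ∈ S | c < x}
    have hST : S = insert a T := by
      rw [insert_eq, ← hL, ← filter_or, filter_true_of_mem fun x _ => le_or_gt x c]
    have haT : a ∉ T := fun h => (mem_filter.mp h).2.not_ge hac
    have hsumT : ∑ x ∈ T, x = n - a := by
      have hsum := (mem_partsAbove.mp hS).2
      rw [hST, sum_insert haT] at hsum
      omega
    have hT : T ∈ partsAbove c (n - a) := by
      refine mem_partsAbove.mpr ⟨fun x hx => mem_Ioc.mpr ⟨(mem_filter.mp hx).2, ?_⟩, hsumT⟩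
      exact hsumT ▸ single_le_sum_of_canonicallyOrdered (f := fun x => x) hx
    have ha : a ∈ Icc 1 c := mem_Icc.mpr ⟨(lt_and_le_of_mem_partsAbove hS haS).1, hac⟩
    exact ⟨⟨a, T⟩, mem_sigma.mpr ⟨ha, hT⟩, hST.symm⟩

lemma partsAbove_zero_filter_card_le_one {n : ℕ} (hn : 0 < n) :
    {S ∈ partsAbove 0 n | #S ≤ 1} = {{n}} := by
  ext S
  simp only [mem_filter, mem_partsAbove, mem_singleton]
  constructor
  · rintro ⟨⟨-, hsum⟩, hcard⟩
    rcases Nat.le_one_iff_eq_zero_or_eq_one.mp hcard with h | h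
    · rw [card_eq_zero.mp h, sum_empty] at hsum
      omega
    · obtain ⟨a, rfl⟩ := card_eq_one.mp h
      rw [sum_singleton] at hsum
      rw [hsum]
  · rintro rfl
    simp [hn]

lemma partsAbove_zero_no_part_le (c n : ℕ) :
    {S ∈ partsAbove 0 n | #{x ∈ S | x ≤ c} = 0} = partsAbove c n := by
  ext S
  simp only [mem_filter, mem_partsAbove, card_eq_zero, filter_eq_empty_iff, not_le, subset_iff,
    mem_Ioc]
  constructor
  · rintro ⟨⟨hS, hsum⟩, hc⟩
    exact ⟨fun x hx => ⟨hc hx, (hS hx).2⟩, hsum⟩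
  · rintro ⟨hS, hsum⟩
    exact ⟨⟨fun x hx => ⟨(Nat.zero_le c).trans_lt (hS hx).1, (hS hx).2⟩, hsum⟩,
      fun x hx => (hS hx).1⟩

lemma sum_partsAbove_zero_at_most_one_part_le {c n : ℕ} (hcn : c ≤ n) :
    ∑ S ∈ partsAbove 0 n with #{x ∈ S | x ≤ c} ≤ 1, (-1 : ℤ) ^ #S
      = signedPartsAbove c n - ∑ a ∈ Icc 1 c, signedPartsAbove c (n - a) := by
  simp_rw [Nat.le_one_iff_eq_zero_or_eq_one]
  rw [filter_or, sum_union (disjoint_filter.mpr fun _ _ h0 h1 => by omega),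
    partsAbove_zero_no_part_le, sum_partsAbove_zero_one_part_le _ hcn,
    sub_eq_add_neg, ← sum_neg_distrib, signedPartsAbove]
  congr 1
  refine sum_congr rfl fun a ha => ?_
  rw [signedPartsAbove, ← sum_neg_distrib]
  refine sum_congr rfl fun T hT => ?_
  have haT : a ∉ T := fun h => (lt_and_le_of_mem_partsAbove hT h).1.not_ge (mem_Icc.mp ha).2
  rw [card_insert_of_notMem haT, pow_succ, mul_neg_one]

lemma secondSmallest_le {c n : ℕ} {S : Finset ℕ} (hS : S ∈ partsAbove c n) :
    secondSmallest S ≤ n := by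
  by_contra h
  obtain ⟨htwo, hone⟩ := (lt_secondSmallest_iff S n).mp (not_le.mp h)
  rw [filter_true_of_mem fun x hx => (lt_and_le_of_mem_partsAbove hS hx).2] at hone
  omega

theorem sum_partsAbove_zero_lt_secondSmallest {c n : ℕ} (hn : 0 < n) (hcn : c ≤ n) :
    ∑ S ∈ partsAbove 0 n with c < secondSmallest S, (-1 : ℤ) ^ #S
      = signedPartsAbove c n - ∑ a ∈ Icc 1 c, signedPartsAbove c (n - a) + 1 := by
  set 𝒮 := {S ∈ partsAbove 0 n | #{x ∈ S | x ≤ c} ≤ 1}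
  have htwo : {S ∈ partsAbove 0 n | c < secondSmallest S} = {S ∈ 𝒮 | 2 ≤ #S} := by
    rw [filter_filter]
    exact filter_congr fun S _ => by rw [lt_secondSmallest_iff, and_comm]
  have hone : {S ∈ 𝒮 | ¬ 2 ≤ #S} = {{n}} := by
    rw [filter_filter, ← partsAbove_zero_filter_card_le_one hn]
    exact filter_congr fun S _ =>
      ⟨fun h => by omega, fun h => ⟨(card_filter_le _ _).trans h, by omega⟩⟩
  have hsplit := sum_filter_add_sum_filter_not 𝒮 (fun S => 2 ≤ #S) (fun S => (-1 : ℤ) ^ #S)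
  rw [← htwo, hone, sum_singleton, card_singleton,
    sum_partsAbove_zero_at_most_one_part_le hcn] at hsplit
  linarith

theorem FFW_two_eq_sum_range {n : ℕ} (hn : 0 < n) :
    FFW 2 n = ∑ c ∈ range n,
      (signedPartsAbove c n - ∑ a ∈ Icc 1 c, signedPartsAbove c (n - a) + 1) := by
  have hcount (S : Finset ℕ) (hS : S ∈ partsAbove 0 n) :
      (secondSmallest S : ℤ) = ∑ c ∈ range n, if c < secondSmallest S then 1 else 0 := by
    have hrange : {c ∈ range n | c < secondSmallest S} = range (secondSmallest S) := by
      ext c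
      simp only [mem_filter, mem_range]
      have := secondSmallest_le hS
      omega
    rw [sum_boole, hrange, card_range]
  rw [FFW_two_eq_sum_partsAbove, sum_congr rfl fun S hS => by rw [hcount S hS]]
  simp_rw [mul_sum, mul_boole]
  rw [sum_comm]
  refine sum_congr rfl fun c hc => ?_
  rw [← sum_filter, sum_partsAbove_zero_lt_secondSmallest hn (mem_range.mp hc).le]

theorem stmt1 (n : ℕ) (hn : 1 ≤ n) :
    FFW 2 n = (∑ j ∈ Finset.Icc 1 (n - 1), (j.divisors.card : ℤ)) - (n.divisors.card : ℤ) + 1 := by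
  have hIcc : Icc 1 (n - 1) = Ico 1 n := by
    ext j
    simp only [mem_Icc, mem_Ico]
    omega
  rw [FFW_two_eq_sum_range hn, sum_add_distrib, sum_sub_distrib,
    sum_range_signedPartsAbove hn le_rfl, sum_range_sum_Icc_signedPartsAbove hn, hIcc, sum_const,
    card_range, nsmul_one]
  ring

end PaperFFW
end

section
/- Let k ≥ 1 be an integer and let q ∈ ℂ with |q| < 1. Then Σ_{n=1}^∞ n q^{kn}/(q;q)_n = (1/(q^k;q)_∞) · Σ_{n=k}^∞ d_{≥k}(n) q^n, where both series converge absolutely. -/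
/-!
Put `e(z) = ∑ zⁿ / (q;q)ₙ`, `θe(z) = z e'(z) = ∑ n zⁿ / (q;q)ₙ` and `L(z) = ∑ⱼ z qʲ / (1 - z qʲ)`.
Shifting `n` in the series gives `e(zq) = (1 - z) e(z)`, `θe(zq) = (1 - z) θe(z) - z e(z)` and
`L(z) = z / (1 - z) + L(zq)`, so both `e` and `θe - e L` are multiplied by `(z;q)ₙ` under
`z ↦ z qⁿ`. All three series are continuous at `0` (dominated convergence), so letting `n → ∞`
gives Euler's identity `(z;q)_∞ e(z) = 1` and `θe = e L = L / (z;q)_∞`. At `z = q^k`,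
`L(q^k) = ∑_{d ≥ k} ∑_{t ≥ 1} q^{dt}`, and collecting the terms with `dt = n` gives
`∑ₙ d_{≥k}(n) qⁿ`.
-/

open Finset Filter

namespace PaperFFW

open scoped Topology

section QPochhammer

variable {a q z : ℂ}

@[simp]
theorem qPoch_zero (a q : ℂ) : qPoch a q 0 = 1 :=
  prod_range_zero _

theorem qPoch_succ (a q : ℂ) (n : ℕ) : qPoch a q (n + 1) = qPoch a q n * (1 - a * q ^ n) :=
  prod_range_succ _ n

theorem summable_norm_mul_pow (hq : ‖q‖ < 1) (a : ℂ) : Summable fun j : ℕ => ‖a * q ^ j‖ := by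
  simpa [norm_mul, norm_pow] using
    (summable_geometric_of_lt_one (norm_nonneg q) hq).mul_left ‖a‖

theorem tendsto_qPoch (hq : ‖q‖ < 1) (a : ℂ) :
    Tendsto (qPoch a q) atTop (𝓝 (qPochInf a q)) := by
  have h : Multipliable fun j : ℕ => 1 + -(a * q ^ j) :=
    multipliable_one_add_of_summable (by simpa using summable_norm_mul_pow hq a)
  simp only [← sub_eq_add_neg] at h
  exact h.hasProd.tendsto_prod_nat

theorem qPochInf_ne_zero (hq : ‖q‖ < 1) (ha : ∀ j, a * q ^ j ≠ 1) : qPochInf a q ≠ 0 := by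
  unfold qPochInf
  have h := tprod_one_add_ne_zero_of_summable (f := fun j : ℕ => -(a * q ^ j))
    (fun j => by simpa [← sub_eq_add_neg, sub_eq_zero] using (ha j).symm)
    (by simpa using summable_norm_mul_pow hq a)
  simpa [← sub_eq_add_neg] using h

theorem norm_mul_pow_le (hq : ‖q‖ ≤ 1) (z : ℂ) (n : ℕ) : ‖z * q ^ n‖ ≤ ‖z‖ := by
  rw [norm_mul, norm_pow]
  exact mul_le_of_le_one_right (norm_nonneg z) (pow_le_one₀ (norm_nonneg q) hq)

theorem mul_pow_ne_one (hq : ‖q‖ ≤ 1) (hz : ‖z‖ < 1) (n : ℕ) : z * q ^ n ≠ 1 := fun h => by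
  simpa [h] using (norm_mul_pow_le hq z n).trans_lt hz

theorem exists_norm_inv_qPoch_le (hq : ‖q‖ < 1) : ∃ C, ∀ n, ‖(qPoch q q n)⁻¹‖ ≤ C := by
  have hne : ∀ j, q * q ^ j ≠ 1 := mul_pow_ne_one hq.le hq
  obtain ⟨C, hC⟩ := isBounded_iff_forall_norm_le.1 <| Metric.isBounded_range_of_tendsto _ <|
    (tendsto_qPoch hq q).inv₀ (qPochInf_ne_zero hq hne)
  exact ⟨C, fun n => hC _ ⟨n, rfl⟩⟩

end QPochhammer

section PowerSeries

variable {𝕜 : Type*} [NormedField 𝕜] {c : ℕ → 𝕜} {r : ℝ}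

theorem summable_mul_pow_of_summable_norm_mul_pow [CompleteSpace 𝕜]
    (hc : Summable fun k => ‖c k‖ * r ^ k) {z : 𝕜} (hz : ‖z‖ ≤ r) :
    Summable fun k => c k * z ^ k :=
  hc.of_norm_bounded fun k => by
    rw [norm_mul, norm_pow]
    gcongr

theorem tendsto_tsum_mul_pow_of_tendsto_zero [CompleteSpace 𝕜]
    (hc : Summable fun k => ‖c k‖ * r ^ k) {w : ℕ → 𝕜} (hw : ∀ n, ‖w n‖ ≤ r)
    (hw0 : Tendsto w atTop (𝓝 0)) :
    Tendsto (fun n => ∑' k, c k * w n ^ k) atTop (𝓝 (c 0)) := by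
  have hsum : ∑' k, c k * (0 : 𝕜) ^ k = c 0 :=
    (tsum_eq_single 0 fun k hk => by simp [hk]).trans (by simp)
  rw [← hsum]
  refine tendsto_tsum_of_dominated_convergence hc (fun k => (hw0.pow k).const_mul (c k)) ?_
  refine Eventually.of_forall fun n k => ?_
  rw [norm_mul, norm_pow]
  gcongr
  exact hw n

theorem tsum_mul_pow_sub_tsum_mul_pow_mul {z q : 𝕜} (hs : Summable fun k => c k * z ^ k)
    (hs' : Summable fun k => c k * (z * q) ^ k) :
    ∑' k, c k * z ^ k - ∑' k, c k * (z * q) ^ k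
      = z * ∑' k, c (k + 1) * (1 - q ^ (k + 1)) * z ^ k := by
  rw [← hs.tsum_sub hs', (hs.sub hs').tsum_eq_zero_add, ← tsum_mul_left]
  simp only [pow_zero, mul_one, sub_self, zero_add]
  exact tsum_congr fun k => by ring

theorem norm_div_one_sub_le {ξ : 𝕜} (hr : r < 1) (hξ : ‖ξ‖ ≤ r) :
    ‖ξ / (1 - ξ)‖ ≤ ‖ξ‖ / (1 - r) := by
  have h1 : 1 - r ≤ ‖1 - ξ‖ := by
    have := norm_sub_norm_le (1 : 𝕜) ξ
    rw [norm_one] at this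
    linarith
  rw [norm_div]
  exact div_le_div_of_nonneg_left (norm_nonneg ξ) (by linarith) h1

end PowerSeries

noncomputable def qExp (q z : ℂ) : ℂ := ∑' n : ℕ, (qPoch q q n)⁻¹ * z ^ n

noncomputable def thetaQExp (q z : ℂ) : ℂ := ∑' n : ℕ, (n * (qPoch q q n)⁻¹) * z ^ n

noncomputable def lambert (q z : ℂ) : ℂ := ∑' j : ℕ, z * q ^ j / (1 - z * q ^ j)

section Series

variable {q z : ℂ} {r : ℝ}

theorem summable_norm_pow_mul_inv_qPoch_mul_pow (hq : ‖q‖ < 1) (i : ℕ) (hr0 : 0 ≤ r)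
    (hr : r < 1) : Summable fun k : ℕ => ‖(k : ℂ) ^ i * (qPoch q q k)⁻¹‖ * r ^ k := by
  obtain ⟨C, hC⟩ := exists_norm_inv_qPoch_le hq
  have hgeom := summable_pow_mul_geometric_of_norm_lt_one (R := ℝ) i
    (by rwa [Real.norm_of_nonneg hr0])
  refine (hgeom.mul_left C).of_nonneg_of_le (fun k => by positivity) fun k => ?_
  rw [norm_mul, norm_pow, Complex.norm_natCast]
  calc (k : ℝ) ^ i * ‖(qPoch q q k)⁻¹‖ * r ^ k ≤ (k : ℝ) ^ i * C * r ^ k := by gcongr; exact hC k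
    _ = C * ((k : ℝ) ^ i * r ^ k) := by ring

theorem summable_norm_inv_qPoch_mul_pow (hq : ‖q‖ < 1) (hr0 : 0 ≤ r) (hr : r < 1) :
    Summable fun k : ℕ => ‖(qPoch q q k)⁻¹‖ * r ^ k := by
  simpa using summable_norm_pow_mul_inv_qPoch_mul_pow hq 0 hr0 hr

theorem summable_norm_natCast_mul_inv_qPoch_mul_pow (hq : ‖q‖ < 1) (hr0 : 0 ≤ r) (hr : r < 1) :
    Summable fun k : ℕ => ‖(k : ℂ) * (qPoch q q k)⁻¹‖ * r ^ k := by
  simpa using summable_norm_pow_mul_inv_qPoch_mul_pow hq 1 hr0 hr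

theorem inv_qPoch_succ_mul (hq : ‖q‖ < 1) (n : ℕ) :
    (qPoch q q (n + 1))⁻¹ * (1 - q ^ (n + 1)) = (qPoch q q n)⁻¹ := by
  have h : 1 - q * q ^ n ≠ 0 := sub_ne_zero.2 (mul_pow_ne_one hq.le hq n).symm
  rw [qPoch_succ, pow_succ', mul_inv, mul_assoc, inv_mul_cancel₀ h, mul_one]

theorem qExp_mul (hq : ‖q‖ < 1) (hz : ‖z‖ < 1) : qExp q (z * q) = (1 - z) * qExp q z := by
  have hzq : ‖z * q‖ ≤ ‖z‖ := by simpa using norm_mul_pow_le hq.le z 1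
  have hc := summable_norm_inv_qPoch_mul_pow hq (norm_nonneg z) hz
  have key := tsum_mul_pow_sub_tsum_mul_pow_mul (q := q)
    (summable_mul_pow_of_summable_norm_mul_pow hc le_rfl)
    (summable_mul_pow_of_summable_norm_mul_pow hc hzq)
  simp only [inv_qPoch_succ_mul hq] at key
  have key' : qExp q z - qExp q (z * q) = z * qExp q z := key
  linear_combination -key'

theorem thetaQExp_mul (hq : ‖q‖ < 1) (hz : ‖z‖ < 1) :
    thetaQExp q (z * q) = (1 - z) * thetaQExp q z - z * qExp q z := by
  have hzq : ‖z * q‖ ≤ ‖z‖ := by simpa using norm_mul_pow_le hq.le z 1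
  have hc := summable_norm_natCast_mul_inv_qPoch_mul_pow hq (norm_nonneg z) hz
  have hc' := summable_norm_inv_qPoch_mul_pow hq (norm_nonneg z) hz
  have key := tsum_mul_pow_sub_tsum_mul_pow_mul (q := q)
    (summable_mul_pow_of_summable_norm_mul_pow hc le_rfl)
    (summable_mul_pow_of_summable_norm_mul_pow hc hzq)
  have hsplit : ∑' k : ℕ, ((k + 1 : ℕ) : ℂ) * (qPoch q q (k + 1))⁻¹ * (1 - q ^ (k + 1)) * z ^ k
      = thetaQExp q z + qExp q z := by
    rw [thetaQExp, qExp, ← (summable_mul_pow_of_summable_norm_mul_pow hc le_rfl).tsum_add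
      (summable_mul_pow_of_summable_norm_mul_pow hc' le_rfl)]
    refine tsum_congr fun k => ?_
    rw [mul_assoc _ (qPoch q q (k + 1))⁻¹, inv_qPoch_succ_mul hq]
    push_cast
    ring
  rw [hsplit] at key
  have key' : thetaQExp q z - thetaQExp q (z * q) = z * (thetaQExp q z + qExp q z) := key
  linear_combination -key'

end Series

section Limits

variable {q z : ℂ} {r : ℝ}

theorem norm_lambert_term_le (hq : ‖q‖ ≤ 1) (hr : r < 1) {w : ℂ} (hw : ‖w‖ ≤ r) (j : ℕ) :
    ‖w * q ^ j / (1 - w * q ^ j)‖ ≤ r * ‖q‖ ^ j / (1 - r) := by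
  refine (norm_div_one_sub_le hr ((norm_mul_pow_le hq w j).trans hw)).trans ?_
  rw [norm_mul, norm_pow]
  have : 0 < 1 - r := by linarith
  gcongr

theorem summable_lambert_bound (hq : ‖q‖ < 1) (r : ℝ) :
    Summable fun j : ℕ => r * ‖q‖ ^ j / (1 - r) :=
  ((summable_geometric_of_lt_one (norm_nonneg q) hq).mul_left r).div_const _

theorem summable_lambert (hq : ‖q‖ < 1) (hz : ‖z‖ < 1) :
    Summable fun j : ℕ => z * q ^ j / (1 - z * q ^ j) :=
  (summable_lambert_bound hq ‖z‖).of_norm_bounded (norm_lambert_term_le hq.le hz le_rfl)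

theorem lambert_eq_add_lambert_mul (hq : ‖q‖ < 1) (hz : ‖z‖ < 1) :
    lambert q z = z / (1 - z) + lambert q (z * q) := by
  rw [lambert, (summable_lambert hq hz).tsum_eq_zero_add, lambert]
  simp only [pow_zero, mul_one, pow_succ', mul_assoc]

theorem tendsto_mul_pow_atTop (hq : ‖q‖ < 1) (z : ℂ) :
    Tendsto (fun n : ℕ => z * q ^ n) atTop (𝓝 0) := by
  simpa using (tendsto_pow_atTop_nhds_zero_of_norm_lt_one hq).const_mul z

theorem tendsto_qExp_mul_pow (hq : ‖q‖ < 1) (hz : ‖z‖ < 1) :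
    Tendsto (fun n : ℕ => qExp q (z * q ^ n)) atTop (𝓝 1) := by
  have h := tendsto_tsum_mul_pow_of_tendsto_zero
    (summable_norm_inv_qPoch_mul_pow hq (norm_nonneg z) hz) (norm_mul_pow_le hq.le z)
    (tendsto_mul_pow_atTop hq z)
  rwa [qPoch_zero, inv_one] at h

theorem tendsto_thetaQExp_mul_pow (hq : ‖q‖ < 1) (hz : ‖z‖ < 1) :
    Tendsto (fun n : ℕ => thetaQExp q (z * q ^ n)) atTop (𝓝 0) := by
  have h := tendsto_tsum_mul_pow_of_tendsto_zero
    (summable_norm_natCast_mul_inv_qPoch_mul_pow hq (norm_nonneg z) hz) (norm_mul_pow_le hq.le z)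
    (tendsto_mul_pow_atTop hq z)
  rwa [Nat.cast_zero, zero_mul] at h

theorem tendsto_lambert_mul_pow (hq : ‖q‖ < 1) (hz : ‖z‖ < 1) :
    Tendsto (fun n : ℕ => lambert q (z * q ^ n)) atTop (𝓝 0) := by
  have hlim : ∀ j : ℕ, Tendsto (fun n : ℕ => z * q ^ n * q ^ j / (1 - z * q ^ n * q ^ j))
      atTop (𝓝 0) := fun j => by
    have h := (tendsto_mul_pow_atTop hq z).mul_const (q ^ j)
    simpa [Pi.div_def] using h.div (h.const_sub 1) (by simp)
  have h := tendsto_tsum_of_dominated_convergence (summable_lambert_bound hq ‖z‖) hlim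
    (Eventually.of_forall fun n => norm_lambert_term_le hq.le hz (norm_mul_pow_le hq.le z n))
  rwa [tsum_zero] at h

theorem eq_qPochInf_mul_of_map_mul (hq : ‖q‖ < 1) {f : ℂ → ℂ}
    (hf : ∀ w : ℂ, ‖w‖ < 1 → f (w * q) = (1 - w) * f w) (hz : ‖z‖ < 1) {L : ℂ}
    (hL : Tendsto (fun n : ℕ => f (z * q ^ n)) atTop (𝓝 L)) : L = qPochInf z q * f z := by
  have hiter : ∀ n : ℕ, f (z * q ^ n) = qPoch z q n * f z := by
    intro n
    induction n with
    | zero => simp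
    | succ n ih =>
      rw [pow_succ, ← mul_assoc, hf _ ((norm_mul_pow_le hq.le z n).trans_lt hz), ih, qPoch_succ]
      ring
  simp only [hiter] at hL
  exact tendsto_nhds_unique hL ((tendsto_qPoch hq z).mul_const (f z))

end Limits

section Identities

variable {q z : ℂ}

theorem qPochInf_mul_qExp (hq : ‖q‖ < 1) (hz : ‖z‖ < 1) : qPochInf z q * qExp q z = 1 :=
  (eq_qPochInf_mul_of_map_mul hq (fun _ hw => qExp_mul hq hw) hz (tendsto_qExp_mul_pow hq hz)).symm

theorem thetaQExp_eq_qExp_mul_lambert (hq : ‖q‖ < 1) (hz : ‖z‖ < 1) :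
    thetaQExp q z = qExp q z * lambert q z := by
  set D : ℂ → ℂ := fun w => thetaQExp q w - qExp q w * lambert q w with hD
  have hDq : ∀ w : ℂ, ‖w‖ < 1 → D (w * q) = (1 - w) * D w := by
    intro w hw
    have hw1 : w ≠ 1 := by simpa using mul_pow_ne_one hq.le hw 0
    have hne : 1 - w ≠ 0 := sub_ne_zero.2 hw1.symm
    have hT : (1 - w) * lambert q (w * q) = (1 - w) * lambert q w - w := by
      rw [lambert_eq_add_lambert_mul hq hw, mul_add, mul_div_cancel₀ _ hne]
      ring
    simp only [hD, thetaQExp_mul hq hw, qExp_mul hq hw]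
    linear_combination (-qExp q w) * hT
  have hlim : Tendsto (fun n : ℕ => D (z * q ^ n)) atTop (𝓝 0) := by
    simpa using (tendsto_thetaQExp_mul_pow hq hz).sub
      ((tendsto_qExp_mul_pow hq hz).mul (tendsto_lambert_mul_pow hq hz))
  have h0 := eq_qPochInf_mul_of_map_mul hq hDq hz hlim
  have hP := qPochInf_ne_zero hq (mul_pow_ne_one hq.le hz)
  exact sub_eq_zero.1 ((mul_eq_zero.1 h0.symm).resolve_left hP)

theorem thetaQExp_eq_lambert_div (hq : ‖q‖ < 1) (hz : ‖z‖ < 1) :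
    thetaQExp q z = lambert q z / qPochInf z q := by
  rw [thetaQExp_eq_qExp_mul_lambert hq hz, div_eq_inv_mul,
    ← eq_inv_of_mul_eq_one_right (qPochInf_mul_qExp hq hz)]

end Identities

section Divisors

variable {k : ℕ}

theorem le_add_mul_succ (k j t : ℕ) : k ≤ (k + j) * (t + 1) :=
  (Nat.le_add_right k j).trans (Nat.le_mul_of_pos_right _ t.succ_pos)

/-- `(j, t) ↦ (m, d)` with `d = k + j` and `m + k = d * (t + 1)`. -/
def prodEquivSigmaDivisorsGE (k : ℕ) (hk : 1 ≤ k) :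
    ℕ × ℕ ≃ Σ m : ℕ, {d // d ∈ (m + k).divisors.filter fun d => k ≤ d} where
  toFun p := ⟨(k + p.1) * (p.2 + 1) - k, k + p.1, by
    rw [mem_filter, Nat.mem_divisors, Nat.sub_add_cancel (le_add_mul_succ k _ _)]
    exact ⟨⟨dvd_mul_right _ _, by positivity⟩, by omega⟩⟩
  invFun σ := (σ.2.1 - k, (σ.1 + k) / σ.2.1 - 1)
  left_inv p := by
    obtain ⟨j, t⟩ := p
    simp only
    rw [Nat.sub_add_cancel (le_add_mul_succ k _ _), Nat.mul_div_cancel_left _ (by omega)]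
    simp
  right_inv σ := by
    obtain ⟨m, d, hd⟩ := σ
    obtain ⟨⟨hdvd, -⟩, hkd⟩ := by simpa only [mem_filter, Nat.mem_divisors] using hd
    have hquot : 1 ≤ (m + k) / d :=
      (Nat.one_le_div_iff (by omega)).2 (Nat.le_of_dvd (by omega) hdvd)
    apply Sigma.subtype_ext
    · simp only
      rw [Nat.add_sub_cancel' hkd, Nat.sub_add_cancel hquot, Nat.mul_div_cancel' hdvd]
      omega
    · simp only
      omega

theorem prodEquivSigmaDivisorsGE_fst_add (hk : 1 ≤ k) (p : ℕ × ℕ) :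
    (prodEquivSigmaDivisorsGE k hk p).1 + k = (k + p.1) * (p.2 + 1) :=
  Nat.sub_add_cancel (le_add_mul_succ k _ _)

variable {q : ℂ}

theorem summable_pow_add_mul_succ (hq : ‖q‖ < 1) (hk : 1 ≤ k) :
    Summable fun p : ℕ × ℕ => q ^ ((k + p.1) * (p.2 + 1)) := by
  have hgeom := summable_geometric_of_lt_one (norm_nonneg q) hq
  refine (hgeom.mul_of_nonneg hgeom (fun _ => by positivity) fun _ => by positivity).of_norm_bounded
    fun p => ?_
  rw [norm_pow, ← pow_add]
  refine pow_le_pow_of_le_one (norm_nonneg q) hq.le ?_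
  nlinarith

theorem hasSum_pow_add_mul_succ (hq : ‖q‖ < 1) (hk : 1 ≤ k) (j : ℕ) :
    HasSum (fun t : ℕ => q ^ ((k + j) * (t + 1))) (q ^ k * q ^ j / (1 - q ^ k * q ^ j)) := by
  have hξ : ‖q ^ (k + j)‖ < 1 := by
    rw [norm_pow]
    exact pow_lt_one₀ (norm_nonneg q) hq (by omega)
  have hterm : (fun t : ℕ => q ^ ((k + j) * (t + 1))) = fun t => q ^ (k + j) * (q ^ (k + j)) ^ t :=
    funext fun t => by rw [← pow_succ', ← pow_mul]
  rw [hterm, ← pow_add, div_eq_mul_inv]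
  exact (hasSum_geometric_of_norm_lt_one hξ).mul_left _

theorem hasSum_prod_lambert (hq : ‖q‖ < 1) (hk : 1 ≤ k) :
    HasSum (fun p : ℕ × ℕ => q ^ ((k + p.1) * (p.2 + 1))) (lambert q (q ^ k)) := by
  have h := (summable_pow_add_mul_succ hq hk).hasSum
  rwa [← (h.prod_fiberwise (hasSum_pow_add_mul_succ hq hk)).tsum_eq] at h

theorem hasSum_dGE_mul_pow (hq : ‖q‖ < 1) (hk : 1 ≤ k) :
    HasSum (fun m : ℕ => (dGE k (m + k) : ℂ) * q ^ (m + k)) (lambert q (q ^ k)) := by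
  let e := prodEquivSigmaDivisorsGE k hk
  have hsigma : HasSum (fun σ : Σ m : ℕ, {d // d ∈ (m + k).divisors.filter fun d => k ≤ d} =>
      q ^ (σ.1 + k)) (lambert q (q ^ k)) := by
    rw [← e.hasSum_iff]
    simpa only [Function.comp_def, e, prodEquivSigmaDivisorsGE_fst_add]
      using hasSum_prod_lambert hq hk
  refine hsigma.sigma fun m => ?_
  simpa [dGE] using hasSum_fintype fun _ : {d // d ∈ (m + k).divisors.filter fun d => k ≤ d} =>
    q ^ (m + k)

end Divisors

theorem stmt6 (k : ℕ) (hk : 1 ≤ k) (q : ℂ) (hq : ‖q‖ < 1) :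
    Summable (fun n : ℕ => ((n + 1 : ℕ) : ℂ) * q ^ (k * (n + 1)) / qPoch q q (n + 1)) ∧
    Summable (fun m : ℕ => ((dGE k (m + k) : ℕ) : ℂ) * q ^ (m + k)) ∧
    ∑' n : ℕ, ((n + 1 : ℕ) : ℂ) * q ^ (k * (n + 1)) / qPoch q q (n + 1)
      = (1 / qPochInf (q ^ k) q) * ∑' m : ℕ, ((dGE k (m + k) : ℕ) : ℂ) * q ^ (m + k) := by
  have hqk : ‖q ^ k‖ < 1 := by
    rw [norm_pow]
    exact pow_lt_one₀ (norm_nonneg q) hq (by omega)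
  have hdiv := hasSum_dGE_mul_pow hq hk
  have htheta : Summable fun n : ℕ => (n * (qPoch q q n)⁻¹) * (q ^ k) ^ n :=
    summable_mul_pow_of_summable_norm_mul_pow
      (summable_norm_natCast_mul_inv_qPoch_mul_pow hq (norm_nonneg _) hqk) le_rfl
  have hterm : ∀ n : ℕ, ((n + 1 : ℕ) : ℂ) * q ^ (k * (n + 1)) / qPoch q q (n + 1)
      = ((n + 1 : ℕ) * (qPoch q q (n + 1))⁻¹) * (q ^ k) ^ (n + 1) := fun n => by
    rw [pow_mul]
    ring
  simp only [hterm]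
  refine ⟨(summable_nat_add_iff 1).2 htheta, hdiv.summable, ?_⟩
  rw [hdiv.tsum_eq, one_div_mul_eq_div, ← thetaQExp_eq_lambert_div hq hqk, thetaQExp,
    htheta.tsum_eq_zero_add]
  simp

end PaperFFW
end

section
/- Let n ≥ 1 be an integer. Then Σ_{π ∈ 𝒟₂(n)} (−1)^{#(π)} = 1 + (−1)^j if n = j(3j+1)/2 or n = j(3j−1)/2 for some positive integer j, and Σ_{π ∈ 𝒟₂(n)} (−1)^{#(π)} = 1 otherwise. -/
open Finset Filter

/-!
The signed count `∑_{π ∈ 𝒟(n)} (-1)^{#(π)}` is the coefficient of `qⁿ` in `∏_{i ≥ 1} (1 - qⁱ)`,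
which Euler's pentagonal number theorem evaluates: it is `(-1)^j` when `n = j(3j ∓ 1)/2` and `0`
otherwise. Dropping the one-part partition `(n)`, whose sign is `-1`, adds `1`.
-/

open PowerSeries
open scoped PowerSeries.WithPiTopology

theorem Multiset.toFinsupp_prod_ite_eq_one {α M : Type*} [DecidableEq α] [CommMonoidWithZero M]
    (s : Multiset α) (a : M) :
    s.toFinsupp.prod (fun _ c ↦ if c = 1 then a else 0) = if s.Nodup then a ^ card s else 0 := by
  rw [Finsupp.prod, Multiset.toFinsupp_support]
  split_ifs with hs
  · rw [← Multiset.toFinset_card_of_nodup hs, ← Finset.prod_const]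
    refine Finset.prod_congr rfl fun x hx ↦ ?_
    simp [Multiset.count_eq_one_of_mem hs (Multiset.mem_toFinset.1 hx)]
  · obtain ⟨x, hx⟩ : ∃ x, 1 < s.count x := by
      simpa [Multiset.nodup_iff_count_le_one] using hs
    refine Finset.prod_eq_zero (Multiset.mem_toFinset.2 (Multiset.one_le_count_iff_mem.1 hx.le)) ?_
    simp [hx.ne']

theorem pentagonal_natCast_eq_iff (j n : ℕ) : pentagonal j = n ↔ 2 * n = j * (3 * j - 1) := by
  have h := two_mul_natCast_pentagonal j
  rcases j with _ | j
  · simp [pentagonal]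
    omega
  · constructor <;> intro h' <;> zify [show 1 ≤ 3 * (j + 1) by omega] at h' ⊢ <;> push_cast at h <;>
      linarith

theorem pentagonal_neg_natCast_eq_iff (j n : ℕ) :
    pentagonal (-j) = n ↔ 2 * n = j * (3 * j + 1) := by
  have h := two_mul_natCast_pentagonal_neg j
  constructor <;> intro h' <;> zify at h' ⊢ <;> linarith

theorem exists_pos_of_pentagonal_eq {k : ℤ} {n : ℕ} (hn : n ≠ 0) (hk : pentagonal k = n) :
    ∃ j : ℕ, 0 < j ∧ (2 * n = j * (3 * j + 1) ∨ 2 * n = j * (3 * j - 1)) := by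
  have hk0 : k ≠ 0 := by
    rintro rfl
    simp [pentagonal] at hk
    omega
  obtain ⟨j, rfl | rfl⟩ := Int.eq_nat_or_neg k
  · exact ⟨j, by omega, .inr ((pentagonal_natCast_eq_iff j n).1 hk)⟩
  · exact ⟨j, by omega, .inl ((pentagonal_neg_natCast_eq_iff j n).1 hk)⟩

namespace Nat.Partition

theorem card_parts_lt_two_iff {n : ℕ} (hn : n ≠ 0) (p : n.Partition) :
    Multiset.card p.parts < 2 ↔ p = indiscrete n := by
  refine ⟨fun hp ↦ Nat.Partition.ext ?_, by rintro rfl; simp [hn]⟩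
  have hsum := p.parts_sum
  obtain hp | hp : Multiset.card p.parts = 0 ∨ Multiset.card p.parts = 1 := by omega
  · simp_all
  · obtain ⟨a, ha⟩ := Multiset.card_eq_one.1 hp
    simp_all

variable (R : Type*) [CommRing R]

theorem genFun_ite_eq_one_neg_one :
    genFun (fun _ c ↦ if c = 1 then (-1 : R) else 0) = pentagonalSeries R := by
  let _ : TopologicalSpace R := ⊥
  have _ : DiscreteTopology R := ⟨rfl⟩
  rw [genFun_eq_tprod, ← WithPiTopology.tprod_one_sub_X_pow R]
  refine tprod_congr fun i ↦ ?_
  rw [tsum_eq_single 0 fun j hj ↦ by simp [hj]]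
  simp [sub_eq_add_neg]

theorem sum_distincts_neg_one_pow_card (n : ℕ) :
    ∑ p ∈ distincts n, (-1 : R) ^ Multiset.card p.parts = (pentagonalSeries R).coeff n := by
  rw [← genFun_ite_eq_one_neg_one, coeff_genFun, distincts, Finset.sum_filter]
  simp only [Multiset.toFinsupp_prod_ite_eq_one]

end Nat.Partition

namespace PaperFFW

theorem sum_distinctPartitions2_neg_one_pow {n : ℕ} (hn : n ≠ 0) :
    ∑ π ∈ distinctPartitions2 n, (-1 : ℤ) ^ numParts π = (pentagonalSeries ℤ).coeff n + 1 := by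
  have hsplit := Finset.sum_filter_add_sum_filter_not (Nat.Partition.distincts n)
    (fun π ↦ 2 ≤ Multiset.card π.parts) (fun π ↦ (-1 : ℤ) ^ Multiset.card π.parts)
  have hmany : (Nat.Partition.distincts n).filter (fun π ↦ 2 ≤ Multiset.card π.parts) =
      distinctPartitions2 n := by
    ext π
    simp [Nat.Partition.distincts, distinctPartitions2]
  have hone : (Nat.Partition.distincts n).filter (fun π ↦ ¬ 2 ≤ Multiset.card π.parts) =
      {Nat.Partition.indiscrete n} := by
    ext π
    simp only [Nat.Partition.distincts, Finset.mem_filter, Finset.mem_univ, true_and, not_le,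
      Nat.Partition.card_parts_lt_two_iff hn, Finset.mem_singleton, and_iff_right_iff_imp]
    rintro rfl
    simp [hn]
  rw [hmany, hone, Finset.sum_singleton, Nat.Partition.indiscrete_parts hn,
    Nat.Partition.sum_distincts_neg_one_pow_card] at hsplit
  simp only [numParts, Multiset.card_singleton, pow_one] at hsplit ⊢
  linarith

theorem stmt12 (n : ℕ) (hn : 1 ≤ n) :
    (∀ j : ℕ, 0 < j → (2 * n = j * (3 * j + 1) ∨ 2 * n = j * (3 * j - 1)) →
        (∑ π ∈ distinctPartitions2 n, (-1 : ℤ) ^ numParts π) = 1 + (-1) ^ j) ∧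
    ((¬ ∃ j : ℕ, 0 < j ∧ (2 * n = j * (3 * j + 1) ∨ 2 * n = j * (3 * j - 1))) →
        (∑ π ∈ distinctPartitions2 n, (-1 : ℤ) ^ numParts π) = 1) := by
  rw [sum_distinctPartitions2_neg_one_pow (by omega)]
  refine ⟨fun j _ hj ↦ ?_, fun hnone ↦ ?_⟩
  · obtain h | h := hj
    · rw [← (pentagonal_neg_natCast_eq_iff j n).2 h, coeff_pentagonalSeries_pentagonal]
      simp [add_comm]
    · rw [← (pentagonal_natCast_eq_iff j n).2 h, coeff_pentagonalSeries_pentagonal]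
      simp [add_comm]
  · rw [coeff_pentagonalSeries_eq_zero, zero_add]
    rintro ⟨k, hk⟩
    exact hnone (exists_pos_of_pentagonal_eq (by omega) hk)

end PaperFFW
end
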